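/- arXiv:1909.01836 — 5 statements merged into one kernel-verified Lean document; each statement's English description precedes it below -/
import Mathlib

section
/- Under the stated setup, the determinant of TᵀR⁻¹T factors as det(TᵀR⁻¹T) = det(HᵀR⁻¹H) · det(WᵀQᴴW). -/
open Matrix

namespace Matrix

variable {R ι κ μ : Type*} [CommRing R] [Fintype ι]

theorem transpose_fromCols_mul_mul_fromCols (M : Matrix ι ι R) (H : Matrix ι κ R)
    (W : Matrix ι μ R) :
    (fromCols H W)ᵀ * M * fromCols H W =
      fromBlocks (Hᵀ * M * H) (Hᵀ * M * W) (Wᵀ * M * H) (Wᵀ * M * W) := by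
  rw [transpose_fromCols, fromRows_mul, fromRows_mul_fromCols]

/-- The Schur complement of the block `HᵀMH` is `Wᵀ (M - M H (HᵀMH)⁻¹ HᵀM) W`. -/
theorem det_transpose_fromCols_mul_mul_fromCols [Fintype κ] [Fintype μ] [DecidableEq κ]
    [DecidableEq μ] (M : Matrix ι ι R) (H : Matrix ι κ R)
    (W : Matrix ι μ R) (hA : IsUnit (Hᵀ * M * H)) :
    ((fromCols H W)ᵀ * M * fromCols H W).det =
      (Hᵀ * M * H).det * (Wᵀ * (M - M * H * (Hᵀ * M * H)⁻¹ * Hᵀ * M) * W).det := by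
  have := hA.invertible
  rw [transpose_fromCols_mul_mul_fromCols, det_fromBlocks₁₁, invOf_eq_nonsing_inv]
  simp only [Matrix.mul_sub, Matrix.sub_mul, Matrix.mul_assoc]

end Matrix

theorem det_Tt_Rinv_T_factorization_general
    (n q p : ℕ)
    (R : Matrix (Fin n) (Fin n) ℝ)
    (H : Matrix (Fin n) (Fin q) ℝ)
    (hA : IsUnit (Hᵀ * R⁻¹ * H))
    (W : Matrix (Fin n) (Fin p) ℝ)
    (T : Matrix (Fin n) (Fin q ⊕ Fin p) ℝ)
    (hT : T = Matrix.fromCols H W)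
    (QH : Matrix (Fin n) (Fin n) ℝ)
    (hQH : QH = R⁻¹ - R⁻¹ * H * (Hᵀ * R⁻¹ * H)⁻¹ * Hᵀ * R⁻¹) :
    (Tᵀ * R⁻¹ * T).det = (Hᵀ * R⁻¹ * H).det * (Wᵀ * QH * W).det := by
  subst hT hQH
  exact det_transpose_fromCols_mul_mul_fromCols R⁻¹ H W hA

/-- Determinant factorization: det(TᵀR⁻¹T) = det(HᵀR⁻¹H)·det(WᵀQᴴW) where
T = [H, W] and Qᴴ = R⁻¹ − R⁻¹H(HᵀR⁻¹H)⁻¹HᵀR⁻¹. -/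
theorem det_Tt_Rinv_T_factorization
    (n q p : ℕ) (hn : 0 < n) (hq : 0 < q) (hp : 0 < p)
    (R : Matrix (Fin n) (Fin n) ℝ) (hR : R.PosDef)
    (H : Matrix (Fin n) (Fin q) ℝ)
    (hA : IsUnit (Hᵀ * R⁻¹ * H))
    (W : Matrix (Fin n) (Fin p) ℝ)
    (T : Matrix (Fin n) (Fin q ⊕ Fin p) ℝ)
    (hT : T = Matrix.fromCols H W)
    (QH : Matrix (Fin n) (Fin n) ℝ)
    (hQH : QH = R⁻¹ - R⁻¹ * H * (Hᵀ * R⁻¹ * H)⁻¹ * Hᵀ * R⁻¹) :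
    (Tᵀ * R⁻¹ * T).det = (Hᵀ * R⁻¹ * H).det * (Wᵀ * QH * W).det :=
  det_Tt_Rinv_T_factorization_general n q p R H hA W T hT QH hQH
end

section
/- Under the stated setup, if additionally the p×p matrix WᵀQᴴW is invertible with inverse ω = (WᵀQᴴW)⁻¹, then the (q+p)×(q+p) matrix TᵀR⁻¹T is invertible and its inverse is the block matrix with (1,1)-block A⁻¹ + A⁻¹HᵀR⁻¹Ω R⁻¹H A⁻¹, (1,2)-block −M, (2,1)-block −Mᵀ, and (2,2)-block ω, where A = HᵀR⁻¹H, Ω = W ω Wᵀ, and M = A⁻¹HᵀR⁻¹W ω. -/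
open Matrix

private lemma aux_block_mul (q p : ℕ)
    (A : Matrix (Fin q) (Fin q) ℝ) (B : Matrix (Fin q) (Fin p) ℝ)
    (C : Matrix (Fin p) (Fin p) ℝ) (ω : Matrix (Fin p) (Fin p) ℝ)
    (hA1 : A * A⁻¹ = 1)
    (hS : (C - Bᵀ * A⁻¹ * B) * ω = 1) :
    fromBlocks A B Bᵀ C *
      fromBlocks (A⁻¹ + A⁻¹ * B * ω * Bᵀ * A⁻¹) (-(A⁻¹ * B * ω)) (-(ω * Bᵀ * A⁻¹)) ω = 1 := by
  have hCω : C * ω = 1 + Bᵀ * A⁻¹ * B * ω := by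
    rw [sub_mul] at hS
    exact eq_add_of_sub_eq hS
  have e11 : A * (A⁻¹ + A⁻¹ * B * ω * Bᵀ * A⁻¹) + B * -(ω * Bᵀ * A⁻¹) = 1 := by
    simp only [Matrix.mul_add, Matrix.mul_neg, ← Matrix.mul_assoc, hA1, Matrix.one_mul]
    abel
  have e12 : A * -(A⁻¹ * B * ω) + B * ω = 0 := by
    simp only [Matrix.mul_neg, ← Matrix.mul_assoc, hA1, Matrix.one_mul]
    abel
  have e21 : Bᵀ * (A⁻¹ + A⁻¹ * B * ω * Bᵀ * A⁻¹) + C * -(ω * Bᵀ * A⁻¹) = 0 := by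
    simp only [Matrix.mul_add, Matrix.mul_neg, ← Matrix.mul_assoc, hCω]
    rw [Matrix.add_mul, Matrix.add_mul, Matrix.one_mul]
    abel
  have e22 : Bᵀ * -(A⁻¹ * B * ω) + C * ω = 1 := by
    simp only [Matrix.mul_neg, ← Matrix.mul_assoc, hCω]
    abel
  rw [fromBlocks_multiply, e11, e12, e21, e22, fromBlocks_one]

/-- Block inverse of TᵀR⁻¹T: if WᵀQᴴW is invertible with inverse ω, then TᵀR⁻¹T is
invertible with inverse the block matrix
[[A⁻¹ + A⁻¹HᵀR⁻¹ΩR⁻¹HA⁻¹, −M], [−Mᵀ, ω]] where A = HᵀR⁻¹H, Ω = WωWᵀ,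
M = A⁻¹HᵀR⁻¹Wω. -/
theorem blockInverse_Tt_Rinv_T
    (n q p : ℕ) (hn : 0 < n) (hq : 0 < q) (hp : 0 < p)
    (R : Matrix (Fin n) (Fin n) ℝ) (hR : R.PosDef)
    (H : Matrix (Fin n) (Fin q) ℝ)
    (A : Matrix (Fin q) (Fin q) ℝ) (hAdef : A = Hᵀ * R⁻¹ * H)
    (hA : IsUnit A)
    (W : Matrix (Fin n) (Fin p) ℝ)
    (T : Matrix (Fin n) (Fin q ⊕ Fin p) ℝ)
    (hT : T = Matrix.fromCols H W)
    (QH : Matrix (Fin n) (Fin n) ℝ)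
    (hQH : QH = R⁻¹ - R⁻¹ * H * A⁻¹ * Hᵀ * R⁻¹)
    (hWQHW : IsUnit (Wᵀ * QH * W))
    (ω : Matrix (Fin p) (Fin p) ℝ) (hω : ω = (Wᵀ * QH * W)⁻¹)
    (Ω : Matrix (Fin n) (Fin n) ℝ) (hΩ : Ω = W * ω * Wᵀ)
    (M : Matrix (Fin q) (Fin p) ℝ) (hM : M = A⁻¹ * Hᵀ * R⁻¹ * W * ω) :
    IsUnit (Tᵀ * R⁻¹ * T) ∧
      (Tᵀ * R⁻¹ * T)⁻¹ =
        Matrix.fromBlocks (A⁻¹ + A⁻¹ * Hᵀ * R⁻¹ * Ω * R⁻¹ * H * A⁻¹) (-M) (-Mᵀ) ω := by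
  -- symmetry facts
  have hRs : Rᵀ = R := by simpa using hR.isHermitian.eq
  have hKs : (R⁻¹)ᵀ = R⁻¹ := by rw [Matrix.transpose_nonsing_inv, hRs]
  have hAs : Aᵀ = A := by
    rw [hAdef]
    simp [Matrix.transpose_mul, hKs, Matrix.mul_assoc]
  have hAinvs : (A⁻¹)ᵀ = A⁻¹ := by rw [Matrix.transpose_nonsing_inv, hAs]
  have hA1 : A * A⁻¹ = 1 :=
    Matrix.mul_nonsing_inv A ((Matrix.isUnit_iff_isUnit_det A).mp hA)
  have hω1 : (Wᵀ * QH * W) * ω = 1 := by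
    rw [hω]
    exact Matrix.mul_nonsing_inv _ ((Matrix.isUnit_iff_isUnit_det _).mp hWQHW)
  have hωs : ωᵀ = ω := by
    have hQHs : QHᵀ = QH := by
      rw [hQH]
      simp [Matrix.transpose_sub, Matrix.transpose_mul, hKs, hAinvs, Matrix.mul_assoc]
    have hSym : (Wᵀ * QH * W)ᵀ = Wᵀ * QH * W := by
      simp [Matrix.transpose_mul, hQHs, Matrix.mul_assoc]
    rw [hω, Matrix.transpose_nonsing_inv, hSym]
  -- notation for blocks
  set B : Matrix (Fin q) (Fin p) ℝ := Hᵀ * R⁻¹ * W with hB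
  set C : Matrix (Fin p) (Fin p) ℝ := Wᵀ * R⁻¹ * W with hC
  have hBt : Bᵀ = Wᵀ * R⁻¹ * H := by
    rw [hB]
    simp [Matrix.transpose_mul, hKs, Matrix.mul_assoc]
  -- Schur complement identity
  have hExpand : Wᵀ * QH * W = C - Bᵀ * A⁻¹ * B := by
    rw [hQH, hBt, hB, hC]
    simp only [Matrix.mul_sub, Matrix.sub_mul, Matrix.mul_assoc]
  have hS : (C - Bᵀ * A⁻¹ * B) * ω = 1 := by rw [← hExpand]; exact hω1
  -- block structure of TᵀR⁻¹T
  have hSblocks : Tᵀ * R⁻¹ * T = fromBlocks A B Bᵀ C := by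
    rw [hT, transpose_fromCols, Matrix.mul_assoc, mul_fromCols,
      fromRows_mul_fromCols, hAdef, hB, hC, hBt]
    simp only [← Matrix.mul_assoc]
  have hM' : M = A⁻¹ * B * ω := by rw [hM, hB]; simp only [Matrix.mul_assoc]
  have hMt : Mᵀ = ω * Bᵀ * A⁻¹ := by
    rw [hM', Matrix.transpose_mul, Matrix.transpose_mul, hωs, hAinvs]
    simp only [← Matrix.mul_assoc]
  have hΩ' : A⁻¹ * Hᵀ * R⁻¹ * Ω * R⁻¹ * H * A⁻¹ = A⁻¹ * B * ω * Bᵀ * A⁻¹ := by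
    rw [hΩ, hB, hBt]; simp only [Matrix.mul_assoc]
  have hG : Matrix.fromBlocks (A⁻¹ + A⁻¹ * Hᵀ * R⁻¹ * Ω * R⁻¹ * H * A⁻¹) (-M) (-Mᵀ) ω =
      fromBlocks (A⁻¹ + A⁻¹ * B * ω * Bᵀ * A⁻¹) (-(A⁻¹ * B * ω)) (-(ω * Bᵀ * A⁻¹)) ω := by
    rw [hΩ', hMt, hM']
  have key : (Tᵀ * R⁻¹ * T) *
      Matrix.fromBlocks (A⁻¹ + A⁻¹ * Hᵀ * R⁻¹ * Ω * R⁻¹ * H * A⁻¹) (-M) (-Mᵀ) ω = 1 := by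
    rw [hSblocks, hG]
    exact aux_block_mul q p A B C ω hA1 hS
  constructor
  · rw [Matrix.isUnit_iff_isUnit_det]
    have := congrArg Matrix.det key
    rw [Matrix.det_mul, Matrix.det_one] at this
    exact IsUnit.of_mul_eq_one _ this
  · exact Matrix.inv_eq_right_inv key
end

section
/- Under the stated setup, if additionally WᵀQᴴW is invertible with inverse ω = (WᵀQᴴW)⁻¹, then T(TᵀR⁻¹T)⁻¹Tᵀ = H A⁻¹ Hᵀ + H A⁻¹ Hᵀ R⁻¹ Ω R⁻¹ H A⁻¹ Hᵀ − W ω Wᵀ R⁻¹ H A⁻¹ Hᵀ − H A⁻¹ Hᵀ R⁻¹ W ω Wᵀ + W ω Wᵀ, where A = HᵀR⁻¹H and Ω = W ω Wᵀ. -/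
open Matrix

/-- Hat-matrix expansion: T(TᵀR⁻¹T)⁻¹Tᵀ = HA⁻¹Hᵀ + HA⁻¹HᵀR⁻¹ΩR⁻¹HA⁻¹Hᵀ
− WωWᵀR⁻¹HA⁻¹Hᵀ − HA⁻¹HᵀR⁻¹WωWᵀ + WωWᵀ, where A = HᵀR⁻¹H, ω = (WᵀQᴴW)⁻¹,
Ω = WωWᵀ. -/
theorem hat_matrix_expansion
    (n q p : ℕ) (hn : 0 < n) (hq : 0 < q) (hp : 0 < p)
    (R : Matrix (Fin n) (Fin n) ℝ) (hR : R.PosDef)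
    (H : Matrix (Fin n) (Fin q) ℝ)
    (A : Matrix (Fin q) (Fin q) ℝ) (hAdef : A = Hᵀ * R⁻¹ * H)
    (hA : IsUnit A)
    (W : Matrix (Fin n) (Fin p) ℝ)
    (T : Matrix (Fin n) (Fin q ⊕ Fin p) ℝ)
    (hT : T = Matrix.fromCols H W)
    (QH : Matrix (Fin n) (Fin n) ℝ)
    (hQH : QH = R⁻¹ - R⁻¹ * H * A⁻¹ * Hᵀ * R⁻¹)
    (hWQHW : IsUnit (Wᵀ * QH * W))
    (ω : Matrix (Fin p) (Fin p) ℝ) (hω : ω = (Wᵀ * QH * W)⁻¹)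
    (Ω : Matrix (Fin n) (Fin n) ℝ) (hΩ : Ω = W * ω * Wᵀ) :
    T * (Tᵀ * R⁻¹ * T)⁻¹ * Tᵀ =
      H * A⁻¹ * Hᵀ
        + H * A⁻¹ * Hᵀ * R⁻¹ * Ω * R⁻¹ * H * A⁻¹ * Hᵀ
        - W * ω * Wᵀ * R⁻¹ * H * A⁻¹ * Hᵀ
        - H * A⁻¹ * Hᵀ * R⁻¹ * W * ω * Wᵀ
        + W * ω * Wᵀ := by
  classical
  set B : Matrix (Fin q) (Fin p) ℝ := Hᵀ * R⁻¹ * W with hB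
  set C : Matrix (Fin p) (Fin q) ℝ := Wᵀ * R⁻¹ * H with hC
  set S : Matrix (Fin p) (Fin p) ℝ := Wᵀ * QH * W with hS
  have hAd : IsUnit A.det := (Matrix.isUnit_iff_isUnit_det A).mp hA
  have hSd : IsUnit S.det := (Matrix.isUnit_iff_isUnit_det S).mp hWQHW
  have hAA : A * A⁻¹ = 1 := Matrix.mul_nonsing_inv A hAd
  have hSω : S * ω = 1 := by rw [hω]; exact Matrix.mul_nonsing_inv S hSd
  have hWRW : Wᵀ * R⁻¹ * W = S + C * A⁻¹ * B := by
    rw [hS, hQH, hB, hC]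
    simp only [Matrix.mul_sub, Matrix.sub_mul, ← Matrix.mul_assoc]
    abel
  set M : Matrix (Fin q ⊕ Fin p) (Fin q ⊕ Fin p) ℝ :=
    Matrix.fromBlocks (A⁻¹ + A⁻¹ * B * ω * C * A⁻¹) (-(A⁻¹ * B * ω))
      (-(ω * C * A⁻¹)) ω with hM
  have hTRT : Tᵀ * R⁻¹ * T = Matrix.fromBlocks A B C (Wᵀ * R⁻¹ * W) := by
    rw [hT, Matrix.transpose_fromCols, Matrix.fromRows_mul,
      Matrix.fromRows_mul_fromCols, hAdef, hB, hC]
  have h11 : A * (A⁻¹ + A⁻¹ * B * ω * C * A⁻¹) + B * -(ω * C * A⁻¹) = 1 := by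
    simp only [Matrix.mul_add, Matrix.mul_neg, ← Matrix.mul_assoc, hAA,
      Matrix.one_mul]
    abel
  have h12 : A * -(A⁻¹ * B * ω) + B * ω = 0 := by
    simp only [Matrix.mul_neg, ← Matrix.mul_assoc, hAA, Matrix.one_mul]
    abel
  have h21 : C * (A⁻¹ + A⁻¹ * B * ω * C * A⁻¹)
      + (S + C * A⁻¹ * B) * -(ω * C * A⁻¹) = 0 := by
    simp only [Matrix.mul_add, Matrix.add_mul, Matrix.mul_neg,
      ← Matrix.mul_assoc, hSω, Matrix.one_mul]
    abel
  have h22 : C * -(A⁻¹ * B * ω) + (S + C * A⁻¹ * B) * ω = 1 := by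
    simp only [Matrix.add_mul, Matrix.mul_neg, ← Matrix.mul_assoc, hSω,
      Matrix.one_mul]
    abel
  have hinv : (Tᵀ * R⁻¹ * T)⁻¹ = M := by
    apply Matrix.inv_eq_right_inv
    rw [hTRT, hM, hWRW, Matrix.fromBlocks_multiply, h11, h12, h21, h22,
      Matrix.fromBlocks_one]
  rw [hinv, hT, hM, Matrix.transpose_fromCols,
    Matrix.fromCols_mul_fromBlocks, Matrix.fromCols_mul_fromRows,
    hΩ, hB, hC]
  simp only [Matrix.mul_add, Matrix.add_mul, Matrix.mul_neg, Matrix.neg_mul,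
    ← Matrix.mul_assoc, sub_eq_add_neg]
  abel
end

section
/- (Lemma S.1 of the paper.) Under the stated setup, with Q = R⁻¹(I − T(TᵀR⁻¹T)⁻¹TᵀR⁻¹), Qᴴ = R⁻¹(I − H A⁻¹ HᵀR⁻¹), K = R⁻¹H A⁻¹ HᵀR⁻¹, ω = (WᵀQᴴW)⁻¹, and Ω = W ω Wᵀ, the quadratic form identity yᵀQy = yᵀQᴴy − yᵀKΩKy + 2·yᵀR⁻¹ΩKy − yᵀR⁻¹ΩR⁻¹y holds for every vector y ∈ ℝⁿ. -/
open Matrix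

/-- Lemma S.1: quadratic form identity
yᵀQy = yᵀQᴴy − yᵀKΩKy + 2 yᵀR⁻¹ΩKy − yᵀR⁻¹ΩR⁻¹y for all y ∈ ℝⁿ, where
Q = R⁻¹(I − T(TᵀR⁻¹T)⁻¹TᵀR⁻¹), Qᴴ = R⁻¹(I − HA⁻¹HᵀR⁻¹), K = R⁻¹HA⁻¹HᵀR⁻¹,
ω = (WᵀQᴴW)⁻¹, Ω = WωWᵀ, A = HᵀR⁻¹H, T = [H, W]. -/
theorem quadratic_form_identity
    (n q p : ℕ) (hn : 0 < n) (hq : 0 < q) (hp : 0 < p)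
    (R : Matrix (Fin n) (Fin n) ℝ) (hR : R.PosDef)
    (H : Matrix (Fin n) (Fin q) ℝ)
    (A : Matrix (Fin q) (Fin q) ℝ) (hAdef : A = Hᵀ * R⁻¹ * H)
    (hA : IsUnit A)
    (W : Matrix (Fin n) (Fin p) ℝ)
    (T : Matrix (Fin n) (Fin q ⊕ Fin p) ℝ)
    (hT : T = Matrix.fromCols H W)
    (QH : Matrix (Fin n) (Fin n) ℝ)
    (hQH : QH = R⁻¹ - R⁻¹ * H * A⁻¹ * Hᵀ * R⁻¹)
    (hWQHW : IsUnit (Wᵀ * QH * W))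
    (Q : Matrix (Fin n) (Fin n) ℝ)
    (hQ : Q = R⁻¹ * (1 - T * (Tᵀ * R⁻¹ * T)⁻¹ * Tᵀ * R⁻¹))
    (K : Matrix (Fin n) (Fin n) ℝ)
    (hK : K = R⁻¹ * H * A⁻¹ * Hᵀ * R⁻¹)
    (ω : Matrix (Fin p) (Fin p) ℝ) (hω : ω = (Wᵀ * QH * W)⁻¹)
    (Ω : Matrix (Fin n) (Fin n) ℝ) (hΩ : Ω = W * ω * Wᵀ) :
    ∀ y : Fin n → ℝ,
      y ⬝ᵥ Q.mulVec y =
        y ⬝ᵥ QH.mulVec y - y ⬝ᵥ (K * Ω * K).mulVec y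
          + 2 * (y ⬝ᵥ (R⁻¹ * Ω * K).mulVec y)
          - y ⬝ᵥ (R⁻¹ * Ω * R⁻¹).mulVec y := by
  intro y
  -- basic symmetry facts
  have hRsymm : Rᵀ = R := by
    have := hR.isHermitian.eq
    simpa [Matrix.conjTranspose_eq_transpose_of_trivial] using this
  have hRinvsymm : (R⁻¹)ᵀ = R⁻¹ := by
    rw [Matrix.transpose_nonsing_inv, hRsymm]
  have hAsymm : Aᵀ = A := by
    rw [hAdef]
    simp [Matrix.transpose_mul, hRinvsymm, Matrix.mul_assoc]
  have hAinvsymm : (A⁻¹)ᵀ = A⁻¹ := by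
    rw [Matrix.transpose_nonsing_inv, hAsymm]
  have hKsymm : Kᵀ = K := by
    rw [hK]
    simp [Matrix.transpose_mul, hRinvsymm, hAinvsymm, Matrix.mul_assoc]
  have hQHsymm : QHᵀ = QH := by
    rw [hQH]
    simp [Matrix.transpose_sub, Matrix.transpose_mul, hRinvsymm, hAinvsymm,
      Matrix.mul_assoc]
  -- invertibility facts
  have hAmul : A * A⁻¹ = 1 := Matrix.mul_nonsing_inv A (A.isUnit_iff_isUnit_det.mp hA)
  have hAmul' : A⁻¹ * A = 1 := Matrix.nonsing_inv_mul A (A.isUnit_iff_isUnit_det.mp hA)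
  set S : Matrix (Fin p) (Fin p) ℝ := Wᵀ * QH * W with hS
  have hSsymm : Sᵀ = S := by
    rw [hS]
    simp [Matrix.transpose_mul, hQHsymm, Matrix.mul_assoc]
  have hSmul : S * ω = 1 := by
    rw [hω]; exact Matrix.mul_nonsing_inv S (S.isUnit_iff_isUnit_det.mp hWQHW)
  have hSmul' : ω * S = 1 := by
    rw [hω]; exact Matrix.nonsing_inv_mul S (S.isUnit_iff_isUnit_det.mp hWQHW)
  have hωsymm : ωᵀ = ω := by
    rw [hω, Matrix.transpose_nonsing_inv, hSsymm]
  have hΩsymm : Ωᵀ = Ω := by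
    rw [hΩ]
    simp [Matrix.transpose_mul, hωsymm, Matrix.mul_assoc]
  -- notation
  set B : Matrix (Fin q) (Fin p) ℝ := Hᵀ * R⁻¹ * W with hB
  set C : Matrix (Fin p) (Fin p) ℝ := Wᵀ * R⁻¹ * W with hC
  have hBt : Bᵀ = Wᵀ * R⁻¹ * H := by
    rw [hB]; simp [Matrix.transpose_mul, hRinvsymm, Matrix.mul_assoc]
  have hCeq : C = S + Bᵀ * A⁻¹ * B := by
    rw [hS, hQH, hC, hBt, hB]
    simp only [Matrix.sub_mul, Matrix.mul_sub, Matrix.add_mul, Matrix.mul_add,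
      Matrix.mul_assoc]
    abel
  -- the explicit inverse of M = Tᵀ R⁻¹ T
  set N : Matrix (Fin q ⊕ Fin p) (Fin q ⊕ Fin p) ℝ :=
    Matrix.fromBlocks (A⁻¹ + A⁻¹ * B * ω * Bᵀ * A⁻¹) (-(A⁻¹ * B * ω))
      (-(ω * Bᵀ * A⁻¹)) ω with hN
  have hM : Tᵀ * R⁻¹ * T = Matrix.fromBlocks A B Bᵀ C := by
    rw [hT, Matrix.transpose_fromCols, Matrix.mul_assoc,
      Matrix.mul_fromCols, Matrix.fromRows_mul_fromCols]
    rw [hAdef, hB, hBt, hC]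
    simp [Matrix.mul_assoc]
  have hAA : ∀ (m : ℕ) (X : Matrix (Fin q) (Fin m) ℝ), A * (A⁻¹ * X) = X := by
    intro m X; rw [← Matrix.mul_assoc, hAmul, Matrix.one_mul]
  have hAA' : ∀ (m : ℕ) (X : Matrix (Fin q) (Fin m) ℝ), A⁻¹ * (A * X) = X := by
    intro m X; rw [← Matrix.mul_assoc, hAmul', Matrix.one_mul]
  have hSω : ∀ (m : ℕ) (X : Matrix (Fin p) (Fin m) ℝ), S * (ω * X) = X := by
    intro m X; rw [← Matrix.mul_assoc, hSmul, Matrix.one_mul]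
  have hMN : (Tᵀ * R⁻¹ * T) * N = 1 := by
    rw [hM, hN, Matrix.fromBlocks_multiply, ← Matrix.fromBlocks_one, hCeq,
      Matrix.fromBlocks_inj]
    refine ⟨?_, ?_, ?_, ?_⟩
    · simp only [Matrix.mul_add, Matrix.mul_neg, Matrix.mul_assoc, hAA, hAmul]
      abel
    · simp only [Matrix.mul_neg, Matrix.mul_assoc, hAA]
      abel
    · simp only [Matrix.mul_add, Matrix.add_mul, Matrix.mul_neg, Matrix.mul_assoc, hSω]
      abel
    · simp only [Matrix.mul_add, Matrix.add_mul, Matrix.mul_neg, Matrix.mul_assoc, hSmul]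
      abel
  have hMinv : (Tᵀ * R⁻¹ * T)⁻¹ = N := Matrix.inv_eq_right_inv hMN
  -- expand Q
  have hTNT : T * N * Tᵀ =
      H * (A⁻¹ + A⁻¹ * B * ω * Bᵀ * A⁻¹) * Hᵀ + H * (-(A⁻¹ * B * ω)) * Wᵀ
        + W * (-(ω * Bᵀ * A⁻¹)) * Hᵀ + W * ω * Wᵀ := by
    rw [hT, hN, Matrix.transpose_fromCols, Matrix.fromCols_mul_fromBlocks,
      Matrix.fromCols_mul_fromRows]
    simp only [Matrix.add_mul, Matrix.mul_assoc]
    abel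
  have hQeq : Q = QH - K * Ω * K + R⁻¹ * Ω * K + K * Ω * R⁻¹ - R⁻¹ * Ω * R⁻¹ := by
    rw [hQ, hMinv, Matrix.mul_sub, Matrix.mul_one, hTNT]
    rw [hQH, hK, hΩ, hBt, hB]
    simp only [Matrix.sub_mul, Matrix.mul_sub, Matrix.add_mul, Matrix.mul_add,
      Matrix.neg_mul, Matrix.mul_neg, Matrix.mul_assoc]
    abel
  -- pass to quadratic forms
  have hcross : y ⬝ᵥ (K * Ω * R⁻¹).mulVec y = y ⬝ᵥ (R⁻¹ * Ω * K).mulVec y := by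
    have ht : (R⁻¹ * Ω * K)ᵀ = K * Ω * R⁻¹ := by
      simp [Matrix.transpose_mul, hKsymm, hΩsymm, hRinvsymm, Matrix.mul_assoc]
    calc y ⬝ᵥ (K * Ω * R⁻¹).mulVec y
        = y ⬝ᵥ (R⁻¹ * Ω * K)ᵀ.mulVec y := by rw [ht]
      _ = y ⬝ᵥ Matrix.vecMul y (R⁻¹ * Ω * K) := by rw [Matrix.mulVec_transpose]
      _ = Matrix.vecMul y (R⁻¹ * Ω * K) ⬝ᵥ y := by rw [dotProduct_comm]
      _ = y ⬝ᵥ (R⁻¹ * Ω * K).mulVec y := by rw [Matrix.dotProduct_mulVec]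
  rw [hQeq]
  simp only [Matrix.sub_mulVec, Matrix.add_mulVec, dotProduct_sub, dotProduct_add, hcross]
  ring
end

section
/- Under the stated setup, the matrix identity Q = Qᴴ − Qᴴ W (WᵀQᴴW)⁻¹ WᵀQᴴ holds, where Q = R⁻¹(I − T(TᵀR⁻¹T)⁻¹TᵀR⁻¹) and Qᴴ = R⁻¹(I − H A⁻¹ HᵀR⁻¹); that is, adjoining the columns W to H updates the generalized-least-squares residual precision matrix Qᴴ by subtracting its rank-p correction along W. -/
open Matrix

/-- Residual precision update: Q = Qᴴ − QᴴW(WᵀQᴴW)⁻¹WᵀQᴴ, where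
Q = R⁻¹(I − T(TᵀR⁻¹T)⁻¹TᵀR⁻¹), Qᴴ = R⁻¹(I − HA⁻¹HᵀR⁻¹), A = HᵀR⁻¹H, T = [H, W]. -/
theorem precision_update
    (n q p : ℕ) (hn : 0 < n) (hq : 0 < q) (hp : 0 < p)
    (R : Matrix (Fin n) (Fin n) ℝ) (hR : R.PosDef)
    (H : Matrix (Fin n) (Fin q) ℝ)
    (A : Matrix (Fin q) (Fin q) ℝ) (hAdef : A = Hᵀ * R⁻¹ * H)
    (hA : IsUnit A)
    (W : Matrix (Fin n) (Fin p) ℝ)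
    (T : Matrix (Fin n) (Fin q ⊕ Fin p) ℝ)
    (hT : T = Matrix.fromCols H W)
    (QH : Matrix (Fin n) (Fin n) ℝ)
    (hQH : QH = R⁻¹ * (1 - H * A⁻¹ * Hᵀ * R⁻¹))
    (hWQHW : IsUnit (Wᵀ * QH * W))
    (Q : Matrix (Fin n) (Fin n) ℝ)
    (hQ : Q = R⁻¹ * (1 - T * (Tᵀ * R⁻¹ * T)⁻¹ * Tᵀ * R⁻¹)) :
    Q = QH - QH * W * (Wᵀ * QH * W)⁻¹ * Wᵀ * QH := by
  set S : Matrix (Fin p) (Fin p) ℝ := Wᵀ * QH * W with hSdef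
  set B : Matrix (Fin q) (Fin p) ℝ := Hᵀ * R⁻¹ * W with hB
  set C : Matrix (Fin p) (Fin q) ℝ := Wᵀ * R⁻¹ * H with hC
  set D : Matrix (Fin p) (Fin p) ℝ := Wᵀ * R⁻¹ * W with hD
  have hA1 : A * A⁻¹ = 1 := Matrix.mul_nonsing_inv A ((Matrix.isUnit_iff_isUnit_det A).mp hA)
  have hS1 : S * S⁻¹ = 1 :=
    Matrix.mul_nonsing_inv S ((Matrix.isUnit_iff_isUnit_det S).mp hWQHW)
  have hSchur : D = S + C * A⁻¹ * B := by
    rw [hSdef, hQH, hB, hC, hD]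
    simp only [Matrix.mul_sub, Matrix.sub_mul, Matrix.mul_one, Matrix.mul_assoc]
    abel
  have hM : Tᵀ * R⁻¹ * T = Matrix.fromBlocks A B C D := by
    rw [hT, transpose_fromCols, fromRows_mul, fromRows_mul_fromCols,
      hAdef, hB, hC, hD]
  set N : Matrix (Fin q ⊕ Fin p) (Fin q ⊕ Fin p) ℝ :=
    Matrix.fromBlocks (A⁻¹ + A⁻¹ * B * S⁻¹ * C * A⁻¹) (-(A⁻¹ * B * S⁻¹))
      (-(S⁻¹ * C * A⁻¹)) S⁻¹ with hN
  have hMN : (Tᵀ * R⁻¹ * T) * N = 1 := by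
    rw [hM, hN, Matrix.fromBlocks_multiply, ← Matrix.fromBlocks_one]
    have e11 : A * (A⁻¹ + A⁻¹ * B * S⁻¹ * C * A⁻¹) + B * -(S⁻¹ * C * A⁻¹) = 1 := by
      have h : A * (A⁻¹ + A⁻¹ * B * S⁻¹ * C * A⁻¹) =
          A * A⁻¹ + A * A⁻¹ * (B * (S⁻¹ * (C * A⁻¹))) := by
        simp only [Matrix.mul_add, Matrix.mul_assoc]
      rw [h, hA1, Matrix.one_mul]
      simp only [Matrix.mul_neg, Matrix.mul_assoc]
      abel
    have e12 : A * -(A⁻¹ * B * S⁻¹) + B * S⁻¹ = 0 := by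
      have h : A * -(A⁻¹ * B * S⁻¹) = -(A * A⁻¹ * (B * S⁻¹)) := by
        simp only [Matrix.mul_neg, Matrix.mul_assoc]
      rw [h, hA1, Matrix.one_mul]
      abel
    have e21 : C * (A⁻¹ + A⁻¹ * B * S⁻¹ * C * A⁻¹) + D * -(S⁻¹ * C * A⁻¹) = 0 := by
      rw [hSchur]
      have h1 : C * (A⁻¹ + A⁻¹ * B * S⁻¹ * C * A⁻¹) =
          C * A⁻¹ + C * A⁻¹ * (B * (S⁻¹ * (C * A⁻¹))) := by
        simp only [Matrix.mul_add, Matrix.mul_assoc]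
      have h2 : (S + C * A⁻¹ * B) * -(S⁻¹ * C * A⁻¹) =
          -(S * S⁻¹ * (C * A⁻¹)) - C * A⁻¹ * (B * (S⁻¹ * (C * A⁻¹))) := by
        simp only [Matrix.add_mul, Matrix.mul_neg, Matrix.mul_assoc, sub_eq_add_neg, neg_add]
      rw [h1, h2, hS1, Matrix.one_mul]
      abel
    have e22 : C * -(A⁻¹ * B * S⁻¹) + D * S⁻¹ = 1 := by
      rw [hSchur]
      have h2 : (S + C * A⁻¹ * B) * S⁻¹ = S * S⁻¹ + C * A⁻¹ * (B * S⁻¹) := by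
        simp only [Matrix.add_mul, Matrix.mul_assoc]
      rw [h2, hS1]
      have h3 : C * -(A⁻¹ * B * S⁻¹) = -(C * A⁻¹ * (B * S⁻¹)) := by
        simp only [Matrix.mul_neg, Matrix.mul_assoc]
      rw [h3]
      abel
    rw [e11, e12, e21, e22]
  have hNinv : (Tᵀ * R⁻¹ * T)⁻¹ = N := Matrix.inv_eq_right_inv hMN
  have hTN : T * N * Tᵀ = H * (A⁻¹ + A⁻¹ * B * S⁻¹ * C * A⁻¹) * Hᵀ
      + H * (-(A⁻¹ * B * S⁻¹)) * Wᵀ + W * (-(S⁻¹ * C * A⁻¹)) * Hᵀ + W * S⁻¹ * Wᵀ := by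
    rw [hT, hN, fromCols_mul_fromBlocks, transpose_fromCols, fromCols_mul_fromRows]
    simp only [Matrix.add_mul]
    abel
  rw [hQ, hNinv, hTN, hB, hC, hQH]
  simp only [Matrix.mul_sub, Matrix.sub_mul, Matrix.mul_add, Matrix.add_mul,
    Matrix.mul_one, Matrix.one_mul, Matrix.neg_mul, Matrix.mul_neg,
    sub_eq_add_neg, neg_add, neg_neg, Matrix.mul_assoc]
  abel
end
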